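/- arXiv:2007.02448 — 2 statements merged into one kernel-verified Lean document; each statement's English description precedes it below -/
import Mathlib

section
/- Strong duality holds for the linear inverse problem: sup{ ⟨λ,x⟩ − ε‖λ‖ : λ ∈ H, ‖λ‖'_φ ≤ 1 } = (β(φ,x,ε,δ))^{1/p}. In particular, the supremum is finite if and only if x is (φ,ε,δ)-feasible, and equals +∞ otherwise. -/
open scoped ENNReal RealInnerProductSpace Pointwise
open Metric Set

noncomputable section

variable {H : Type*} [NormedAddCommGroup H] [InnerProductSpace ℝ H]

/-- Feasible pairs `(𝔠, f)` of the linear inverse problem `LIP(φ, x, ε, δ)`: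
`(c f)^(1/p) ≤ 𝔠` and `‖x - φ f‖ ≤ ε + δ 𝔠`. -/
def lipFeas (K : ℕ) (p : ℝ) (c : (Fin K → ℝ) → ℝ)
    (φ : (Fin K → ℝ) →ₗ[ℝ] H) (x : H) (ε δ : ℝ) : Set (ℝ × (Fin K → ℝ)) :=
  {cf | c cf.2 ^ (1 / p) ≤ cf.1 ∧ ‖x - φ cf.2‖ ≤ ε + δ * cf.1}

/-- The optimal value `β(φ,x,ε,δ) ∈ [0,∞]` of `LIP(φ,x,ε,δ)`, i.e. the infimum of `𝔠^p`
over feasible pairs `(𝔠,f)`; it equals `∞` if the problem is infeasible. -/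
def lipVal (K : ℕ) (p : ℝ) (c : (Fin K → ℝ) → ℝ)
    (φ : (Fin K → ℝ) →ₗ[ℝ] H) (x : H) (ε δ : ℝ) : ℝ≥0∞ :=
  sInf ((fun cf : ℝ × (Fin K → ℝ) => ENNReal.ofReal (cf.1 ^ p)) '' lipFeas K p c φ x ε δ)

/-- `E(φ,x,ε,δ)`: the set of `f`-components of optimal solutions of `LIP(φ,x,ε,δ)`. -/
def lipEnc (K : ℕ) (p : ℝ) (c : (Fin K → ℝ) → ℝ)
    (φ : (Fin K → ℝ) →ₗ[ℝ] H) (x : H) (ε δ : ℝ) : Set (Fin K → ℝ) :=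
  {f | ∃ 𝔠 : ℝ, (𝔠, f) ∈ lipFeas K p c φ x ε δ ∧
      ENNReal.ofReal (𝔠 ^ p) = lipVal K p c φ x ε δ}

/-- The set `S_δ(φ,1) = {z : ∃ f, c f ≤ 1 ∧ ‖z - φ f‖ ≤ δ}`. -/
def lipSet (K : ℕ) (c : (Fin K → ℝ) → ℝ)
    (φ : (Fin K → ℝ) →ₗ[ℝ] H) (δ : ℝ) : Set H :=
  {z | ∃ f, c f ≤ 1 ∧ ‖z - φ f‖ ≤ δ}

/-- The dual function `‖λ‖'_φ = sup {⟨λ,z⟩ : z ∈ S_δ(φ,1)}`. -/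
def lipDual (K : ℕ) (c : (Fin K → ℝ) → ℝ)
    (φ : (Fin K → ℝ) →ₗ[ℝ] H) (δ : ℝ) (l : H) : ℝ :=
  sSup ((fun z => ⟪l, z⟫) '' lipSet K c φ δ)

/-- The set `Λ_δ(φ,x,ε)` of optimal dual variables: `λ` with `‖λ‖'_φ = 1` and
`⟨λ,x⟩ - ε‖λ‖ = (β(φ,x,ε,δ))^(1/p)`. -/
def lipLambda (K : ℕ) (p : ℝ) (c : (Fin K → ℝ) → ℝ)
    (φ : (Fin K → ℝ) →ₗ[ℝ] H) (x : H) (ε δ : ℝ) : Set H :=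
  {l | lipDual K c φ δ l = 1 ∧
      ENNReal.ofReal (⟪l, x⟫ - ε * ‖l‖) = lipVal K p c φ x ε δ ^ (1 / p)}

/-- `S_δ(φ,1)` as a pointwise sum of sets. -/
lemma lipSet_eq_add (K : ℕ) (c : (Fin K → ℝ) → ℝ)
    (φ : (Fin K → ℝ) →ₗ[ℝ] H) (δ : ℝ) :
    lipSet K c φ δ = φ '' {f | c f ≤ 1} + Metric.closedBall (0 : H) δ := by
  ext z
  simp only [lipSet, Set.mem_setOf_eq, Set.mem_add, Set.mem_image, mem_closedBall_zero_iff]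
  constructor
  · rintro ⟨f, hf, hz⟩
    exact ⟨φ f, ⟨f, hf, rfl⟩, z - φ f, by simpa using hz, by abel⟩
  · rintro ⟨a, ⟨f, hf, rfl⟩, b, hb, rfl⟩
    exact ⟨f, hf, by simpa using hb⟩

/-- Strong duality:
`sup { ⟨λ,x⟩ − ε‖λ‖ : ‖λ‖'_φ ≤ 1 } = (β(φ,x,ε,δ))^(1/p)` (computed in `[0,∞]`; the
supremum is nonnegative since `λ = 0` is feasible).  In particular the supremum is finite
iff `x` is `(φ,ε,δ)`-feasible. -/
theorem strong_duality
    [FiniteDimensional ℝ H]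
    (K : ℕ) (p : ℝ) (c : (Fin K → ℝ) → ℝ)
    (φ : (Fin K → ℝ) →ₗ[ℝ] H) (x : H) (ε δ : ℝ)
    (hp : 0 < p) (hc0 : ∀ f, 0 ≤ c f)
    (hhom : ∀ (α : ℝ) (f : Fin K → ℝ), 0 ≤ α → c (α • f) = α ^ p * c f)
    (hconv : Convex ℝ {f | c f ≤ 1}) (hcpt : IsCompact {f | c f ≤ 1})
    (hε : 0 ≤ ε) (hδ : 0 ≤ δ) :
    sSup ((fun l : H => ENNReal.ofReal (⟪l, x⟫ - ε * ‖l‖)) ''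
        {l : H | lipDual K c φ δ l ≤ 1}) = lipVal K p c φ x ε δ ^ (1 / p) ∧
    (sSup ((fun l : H => ENNReal.ofReal (⟪l, x⟫ - ε * ‖l‖)) ''
        {l : H | lipDual K c φ δ l ≤ 1}) ≠ ⊤ ↔ lipVal K p c φ x ε δ ≠ ⊤) := by
  have hp' : p ≠ 0 := hp.ne'
  have hc00 : c 0 = 0 := by
    have h := hhom 0 0 le_rfl
    simpa [Real.zero_rpow hp'] using h
  have h0S : (0 : H) ∈ lipSet K c φ δ := ⟨0, by simp [hc00], by simpa using hδ⟩
  have hSne : (lipSet K c φ δ).Nonempty := ⟨0, h0S⟩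
  have hScpt : IsCompact (lipSet K c φ δ) := by
    rw [lipSet_eq_add]
    exact (hcpt.image φ.continuous_of_finiteDimensional).add (isCompact_closedBall _ _)
  have hSconv : Convex ℝ (lipSet K c φ δ) := by
    rw [lipSet_eq_add]
    exact (hconv.linear_image φ).add (convex_closedBall _ _)
  have hbdd : ∀ l : H, BddAbove ((fun z => ⟪l, z⟫) '' lipSet K c φ δ) := fun l =>
    (hScpt.image (continuous_const.inner continuous_id)).bddAbove
  have hdual_mem : ∀ (l : H) z, z ∈ lipSet K c φ δ → ⟪l, z⟫ ≤ lipDual K c φ δ l :=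
    fun l z hz => le_csSup (hbdd l) ⟨z, hz, rfl⟩
  have hdual_le : ∀ (l : H) (b : ℝ), (∀ z ∈ lipSet K c φ δ, ⟪l, z⟫ ≤ b) →
      lipDual K c φ δ l ≤ b := fun l b hb =>
    csSup_le (hSne.image _) (by rintro r ⟨z, hz, rfl⟩; exact hb z hz)
  -- feasible pairs bound the value from above
  have hfeas_le : ∀ t f, (t, f) ∈ lipFeas K p c φ x ε δ →
      lipVal K p c φ x ε δ ≤ ENNReal.ofReal (t ^ p) := fun t f h => sInf_le ⟨(t, f), h, rfl⟩
  -- a point of `t • S + ε B̄` gives a feasible pair with cost `t`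
  have hfeas_of : ∀ t : ℝ, 0 ≤ t → ∀ z ∈ lipSet K c φ δ, ‖x - t • z‖ ≤ ε →
      lipVal K p c φ x ε δ ≤ ENNReal.ofReal (t ^ p) := by
    intro t ht z hz he
    obtain ⟨g, hg1, hg2⟩ := hz
    refine hfeas_le t (t • g) ⟨?_, ?_⟩
    · have h1 : c (t • g) ≤ t ^ p := by
        rw [hhom t g ht]
        calc t ^ p * c g ≤ t ^ p * 1 :=
              mul_le_mul_of_nonneg_left hg1 (Real.rpow_nonneg ht p)
          _ = t ^ p := mul_one _
      calc c (t • g) ^ (1 / p) ≤ (t ^ p) ^ (1 / p) :=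
            Real.rpow_le_rpow (hc0 _) h1 (by positivity)
        _ = t := by
            rw [← Real.rpow_mul ht, mul_one_div_cancel hp', Real.rpow_one]
    · have hrw : x - φ (t • g) = (x - t • z) + t • (z - φ g) := by
        rw [map_smul, smul_sub]; abel
      calc ‖x - φ (t • g)‖ ≤ ‖x - t • z‖ + ‖t • (z - φ g)‖ := by
            rw [hrw]; exact norm_add_le _ _
        _ ≤ ε + δ * t := by
            refine add_le_add he ?_
            rw [norm_smul, Real.norm_eq_abs, abs_of_nonneg ht, mul_comm δ t]
            exact mul_le_mul_of_nonneg_left hg2 ht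
  -- weak duality core inequality
  have weak : ∀ l : H, lipDual K c φ δ l ≤ 1 →
      ∀ t f, (t, f) ∈ lipFeas K p c φ x ε δ → 0 < t → ⟪l, x⟫ - ε * ‖l‖ ≤ t := by
    intro l hl t f hfeas ht
    have hcf : c f ≤ t ^ p := by
      have h := Real.rpow_le_rpow (Real.rpow_nonneg (hc0 f) _) hfeas.1 hp.le
      rwa [← Real.rpow_mul (hc0 f), one_div_mul_cancel hp', Real.rpow_one] at h
    have hcg : c (t⁻¹ • f) ≤ 1 := by
      rw [hhom _ _ (inv_nonneg.2 ht.le)]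
      calc t⁻¹ ^ p * c f ≤ t⁻¹ ^ p * t ^ p :=
            mul_le_mul_of_nonneg_left hcf (Real.rpow_nonneg (inv_nonneg.2 ht.le) _)
        _ = (t⁻¹ * t) ^ p := (Real.mul_rpow (inv_nonneg.2 ht.le) ht.le).symm
        _ = 1 := by rw [inv_mul_cancel₀ ht.ne', Real.one_rpow]
    set w : H := x - φ f with hw
    have hwb : ‖w‖ ≤ ε + δ * t := hfeas.2
    set e : H := if ‖w‖ ≤ ε then w else (ε / ‖w‖) • w with he
    have hee : ‖e‖ ≤ ε ∧ ‖w - e‖ ≤ δ * t := by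
      by_cases hcase : ‖w‖ ≤ ε
      · rw [he, if_pos hcase]
        exact ⟨hcase, by simpa using mul_nonneg hδ ht.le⟩
      · push_neg at hcase
        have hwpos : 0 < ‖w‖ := lt_of_le_of_lt hε hcase
        rw [he, if_neg (not_le.2 hcase)]
        constructor
        · rw [norm_smul, Real.norm_eq_abs, abs_of_nonneg (by positivity)]
          rw [div_mul_cancel₀ _ hwpos.ne']
        · have h1 : w - (ε / ‖w‖) • w = (1 - ε / ‖w‖) • w := by
            rw [sub_smul, one_smul]
          rw [h1, norm_smul, Real.norm_eq_abs, abs_of_nonneg ?_]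
          · rw [sub_mul, one_mul, div_mul_cancel₀ _ hwpos.ne']
            linarith
          · have : ε / ‖w‖ ≤ 1 := (div_le_one hwpos).2 hcase.le
            linarith
    obtain ⟨he1, he2⟩ := hee
    set z : H := φ (t⁻¹ • f) + t⁻¹ • (w - e) with hz
    have hzS : z ∈ lipSet K c φ δ := by
      refine ⟨t⁻¹ • f, hcg, ?_⟩
      rw [hz, add_sub_cancel_left, norm_smul, Real.norm_eq_abs,
        abs_of_nonneg (inv_nonneg.2 ht.le)]
      calc t⁻¹ * ‖w - e‖ ≤ t⁻¹ * (δ * t) :=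
            mul_le_mul_of_nonneg_left he2 (inv_nonneg.2 ht.le)
        _ = δ := by field_simp
    have hxz : x = t • z + e := by
      rw [hz, smul_add, smul_smul, mul_inv_cancel₀ ht.ne', one_smul, map_smul,
        smul_smul, mul_inv_cancel₀ ht.ne', one_smul, hw]
      abel
    have h1 : ⟪l, z⟫ ≤ 1 := le_trans (hdual_mem l z hzS) hl
    have h2 : ⟪l, e⟫ ≤ ‖l‖ * ε :=
      le_trans (real_inner_le_norm l e) (mul_le_mul_of_nonneg_left he1 (norm_nonneg l))
    have h3 : ⟪l, x⟫ = t * ⟪l, z⟫ + ⟪l, e⟫ := by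
      rw [hxz, inner_add_right, real_inner_smul_right]
    nlinarith [norm_nonneg l]
  -- the ≤ direction
  have hle : sSup ((fun l : H => ENNReal.ofReal (⟪l, x⟫ - ε * ‖l‖)) ''
      {l : H | lipDual K c φ δ l ≤ 1}) ≤ lipVal K p c φ x ε δ ^ (1 / p) := by
    apply sSup_le
    rintro b ⟨l, hl, rfl⟩
    rcases le_or_gt (⟪l, x⟫ - ε * ‖l‖) 0 with hD0 | hD0
    · simp [ENNReal.ofReal_eq_zero.2 hD0]
    · set D : ℝ := ⟪l, x⟫ - ε * ‖l‖ with hD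
      have key : ∀ t f, (t, f) ∈ lipFeas K p c φ x ε δ → D ≤ t := by
        intro t f hf
        rcases lt_or_ge 0 t with ht | ht
        · exact weak l hl t f hf ht
        · have ht0 : t = 0 :=
            le_antisymm ht (le_trans (Real.rpow_nonneg (hc0 f) _) hf.1)
          have hcf0 : c f ^ (1 / p) ≤ 0 := ht0 ▸ hf.1
          have hfeas' : (D / 2, f) ∈ lipFeas K p c φ x ε δ := by
            constructor
            · linarith
            · have h2 := hf.2
              rw [ht0] at h2
              have : (0:ℝ) ≤ δ * (D / 2) := mul_nonneg hδ (by linarith)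
              simp only [mul_zero, add_zero] at h2
              linarith
          have := weak l hl (D / 2) f hfeas' (by linarith)
          linarith
      have hDp : ENNReal.ofReal (D ^ p) ≤ lipVal K p c φ x ε δ := by
        apply le_sInf
        rintro b ⟨⟨t, f⟩, hf, rfl⟩
        exact ENNReal.ofReal_le_ofReal (Real.rpow_le_rpow hD0.le (key t f hf) hp.le)
      calc ENNReal.ofReal D = ENNReal.ofReal (D ^ p) ^ (1 / p) := by
            rw [ENNReal.ofReal_rpow_of_nonneg (Real.rpow_nonneg hD0.le p) (by positivity),
              ← Real.rpow_mul hD0.le, mul_one_div_cancel hp', Real.rpow_one]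
        _ ≤ lipVal K p c φ x ε δ ^ (1 / p) := ENNReal.rpow_le_rpow hDp (by positivity)
  -- the ≥ direction
  have hge : lipVal K p c φ x ε δ ^ (1 / p) ≤
      sSup ((fun l : H => ENNReal.ofReal (⟪l, x⟫ - ε * ‖l‖)) ''
        {l : H | lipDual K c φ δ l ≤ 1}) := by
    refine ENNReal.le_of_forall_nnreal_lt fun r hr => ?_
    set t : ℝ := (r : ℝ) with htdef
    have ht0 : (0:ℝ) ≤ t := r.2
    have hstep : ENNReal.ofReal (t ^ p) < lipVal K p c φ x ε δ := by
      have h2 : ((r : ℝ≥0∞)) ^ p < (lipVal K p c φ x ε δ ^ (1 / p)) ^ p :=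
        ENNReal.rpow_lt_rpow hr hp
      rw [← ENNReal.rpow_mul, one_div_mul_cancel hp', ENNReal.rpow_one] at h2
      calc ENNReal.ofReal (t ^ p) = ENNReal.ofReal t ^ p :=
            (ENNReal.ofReal_rpow_of_nonneg ht0 hp.le).symm
        _ = (r : ℝ≥0∞) ^ p := by rw [ENNReal.ofReal_coe_nnreal]
        _ < lipVal K p c φ x ε δ := h2
    have hxT : x ∉ t • lipSet K c φ δ + Metric.closedBall (0 : H) ε := by
      intro hmem
      rw [Set.mem_add] at hmem
      obtain ⟨a, ha, b, hb, hab⟩ := hmem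
      obtain ⟨z, hzS, rfl⟩ := ha
      rw [mem_closedBall_zero_iff] at hb
      have hxe : ‖x - t • z‖ ≤ ε := by
        have : x - t • z = b := by rw [← hab]; abel
        rw [this]; exact hb
      exact absurd (hfeas_of t ht0 z hzS hxe) (not_le.2 hstep)
    have hTconv : Convex ℝ (t • lipSet K c φ δ + Metric.closedBall (0 : H) ε) :=
      (hSconv.smul t).add (convex_closedBall _ _)
    have hTcpt : IsCompact (t • lipSet K c φ δ + Metric.closedBall (0 : H) ε) :=
      (hScpt.smul t).add (isCompact_closedBall _ _)
    obtain ⟨F, u, hFs, hFx⟩ :=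
      geometric_hahn_banach_closed_point hTconv hTcpt.isClosed hxT
    set l0 : H := (InnerProductSpace.toDual ℝ H).symm F with hl0
    have hFl0 : ∀ y : H, ⟪l0, y⟫ = F y := fun y => InnerProductSpace.toDual_symm_apply
    have h0T : (0 : H) ∈ t • lipSet K c φ δ + Metric.closedBall (0 : H) ε := by
      rw [Set.mem_add]
      exact ⟨t • 0, Set.smul_mem_smul_set h0S, 0, by simpa using hε, by simp⟩
    have hl0ne : l0 ≠ 0 := by
      intro h0
      have h1 : F 0 < u := hFs 0 h0T
      have h2 : (0:ℝ) = F 0 := by rw [← hFl0 0, inner_zero_right]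
      have h3 : ⟪l0, x⟫ = F x := hFl0 x
      rw [h0, inner_zero_left] at h3
      rw [← h2] at h1
      linarith [hFx, h3 ▸ hFx]
    have hl0x : u < ⟪l0, x⟫ := by rw [hFl0]; exact hFx
    have hbound : ∀ z ∈ lipSet K c φ δ, t * ⟪l0, z⟫ + ε * ‖l0‖ < u := by
      intro z hz
      have hnpos : 0 < ‖l0‖ := norm_pos_iff.2 hl0ne
      set e : H := (ε / ‖l0‖) • l0 with he
      have hel : ‖e‖ = ε := by
        rw [he, norm_smul, Real.norm_eq_abs, abs_of_nonneg (by positivity),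
          div_mul_cancel₀ _ hnpos.ne']
      have hmemT : t • z + e ∈ t • lipSet K c φ δ + Metric.closedBall (0 : H) ε := by
        rw [Set.mem_add]
        exact ⟨t • z, Set.smul_mem_smul_set hz, e, mem_closedBall_zero_iff.2 hel.le, rfl⟩
      have hFlt := hFs _ hmemT
      rw [← hFl0, inner_add_right, real_inner_smul_right] at hFlt
      have hinner : ⟪l0, e⟫ = ε * ‖l0‖ := by
        rw [he, real_inner_smul_right, real_inner_self_eq_norm_sq]
        field_simp
      linarith [hFlt, hinner.symm ▸ hFlt]
    have hσ0 : 0 ≤ lipDual K c φ δ l0 := by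
      have := hdual_mem l0 0 h0S
      simpa using this
    rcases eq_or_lt_of_le hσ0 with hσeq | hσpos
    · -- sup over S of ⟪l0,·⟫ is 0
      set D0 : ℝ := ⟪l0, x⟫ - ε * ‖l0‖ with hD0def
      have hD0pos : 0 < D0 := by
        have h00 := hbound 0 h0S
        simp only [inner_zero_right, mul_zero, zero_add] at h00
        rw [hD0def]; linarith
      set α : ℝ := t / D0 with hα
      have hα0 : 0 ≤ α := div_nonneg ht0 hD0pos.le
      have hdual : lipDual K c φ δ (α • l0) ≤ 1 := by
        apply hdual_le
        intro z hz
        have hzz : ⟪l0, z⟫ ≤ 0 := by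
          have := hdual_mem l0 z hz
          rw [← hσeq] at this
          exact this
        rw [real_inner_smul_left]
        nlinarith
      have hval : ⟪α • l0, x⟫ - ε * ‖α • l0‖ = t := by
        rw [real_inner_smul_left, norm_smul, Real.norm_eq_abs, abs_of_nonneg hα0]
        have : α * ⟪l0, x⟫ - ε * (α * ‖l0‖) = α * D0 := by rw [hD0def]; ring
        rw [this, hα, div_mul_cancel₀ _ hD0pos.ne']
      calc (r : ℝ≥0∞) = ENNReal.ofReal t := ENNReal.ofReal_coe_nnreal.symm
        _ ≤ sSup ((fun l : H => ENNReal.ofReal (⟪l, x⟫ - ε * ‖l‖)) ''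
            {l : H | lipDual K c φ δ l ≤ 1}) := le_sSup ⟨α • l0, hdual, by dsimp only; rw [hval]⟩
    · set σ : ℝ := lipDual K c φ δ l0 with hσdef
      have htσ : t * σ + ε * ‖l0‖ ≤ u := by
        rcases eq_or_lt_of_le ht0 with ht' | ht'
        · have h00 := hbound 0 h0S
          simp only [inner_zero_right, mul_zero, zero_add] at h00
          rw [← ht', zero_mul, zero_add]
          linarith
        · have hσle : σ ≤ (u - ε * ‖l0‖) / t := by
            apply hdual_le
            intro z hz
            have := hbound z hz
            rw [le_div_iff₀ ht']
            nlinarith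
          have h5 := mul_le_mul_of_nonneg_left hσle ht'.le
          have h6 : t * ((u - ε * ‖l0‖) / t) = u - ε * ‖l0‖ := by field_simp
          rw [h6] at h5
          linarith
      have hdual : lipDual K c φ δ (σ⁻¹ • l0) ≤ 1 := by
        apply hdual_le
        intro z hz
        have hzz : ⟪l0, z⟫ ≤ σ := hdual_mem l0 z hz
        rw [real_inner_smul_left]
        calc σ⁻¹ * ⟪l0, z⟫ ≤ σ⁻¹ * σ :=
              mul_le_mul_of_nonneg_left hzz (inv_nonneg.2 hσpos.le)
          _ = 1 := inv_mul_cancel₀ hσpos.ne'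
      have hval : t < ⟪σ⁻¹ • l0, x⟫ - ε * ‖σ⁻¹ • l0‖ := by
        rw [real_inner_smul_left, norm_smul, Real.norm_eq_abs,
          abs_of_nonneg (inv_nonneg.2 hσpos.le)]
        have h1 : t * σ + ε * ‖l0‖ < ⟪l0, x⟫ := lt_of_le_of_lt htσ hl0x
        have h2 : σ⁻¹ * ⟪l0, x⟫ - ε * (σ⁻¹ * ‖l0‖) = σ⁻¹ * (⟪l0, x⟫ - ε * ‖l0‖) := by ring
        rw [h2]
        have h3 : σ⁻¹ * (t * σ) = t := by field_simp
        have h4 : σ⁻¹ * (t * σ) < σ⁻¹ * (⟪l0, x⟫ - ε * ‖l0‖) :=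
          mul_lt_mul_of_pos_left (by linarith) (inv_pos.2 hσpos)
        linarith
      calc (r : ℝ≥0∞) = ENNReal.ofReal t := ENNReal.ofReal_coe_nnreal.symm
        _ ≤ ENNReal.ofReal (⟪σ⁻¹ • l0, x⟫ - ε * ‖σ⁻¹ • l0‖) :=
            ENNReal.ofReal_le_ofReal hval.le
        _ ≤ sSup ((fun l : H => ENNReal.ofReal (⟪l, x⟫ - ε * ‖l‖)) ''
            {l : H | lipDual K c φ δ l ≤ 1}) := le_sSup ⟨σ⁻¹ • l0, hdual, rfl⟩
  have hmain := le_antisymm hle hge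
  refine ⟨hmain, ?_⟩
  rw [hmain, not_iff_not, ENNReal.rpow_eq_top_iff]
  constructor
  · rintro (⟨_, h⟩ | ⟨h, _⟩)
    · exact absurd h (not_lt.2 (by positivity))
    · exact h
  · intro h
    exact Or.inr ⟨h, by positivity⟩
end
end

section
/- Consider the dual problem: maximize ⟨λ,x⟩ − ε‖λ‖ over λ ∈ H subject to ‖λ‖'_φ ≤ 1. Then: (a) irrespective of δ, if ‖x‖ ≤ ε, then λ* = 0 is an optimal solution; (b) if ‖x‖ > ε, the dual problem admits an optimal solution if and only if Λ_δ(φ,x,ε) ≠ ∅, and λ* is an optimal solution if and only if λ* ∈ Λ_δ(φ,x,ε); (c) if ‖x‖ > ε, x is (φ,ε,δ)-feasible, and Λ_δ(φ,x,ε) = ∅, then the dual problem admits no optimal solution even though its supremum value is finite. -/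
open scoped ENNReal RealInnerProductSpace Pointwise
open Metric Set

noncomputable section

variable {H : Type*} [NormedAddCommGroup H] [InnerProductSpace ℝ H]

/-- `λ` is an optimal solution of the dual problem
`sup { ⟨λ,x⟩ − ε‖λ‖ : λ ∈ H, ‖λ‖'_φ ≤ 1 }`. -/
def lipDualOpt (K : ℕ) (c : (Fin K → ℝ) → ℝ)
    (φ : (Fin K → ℝ) →ₗ[ℝ] H) (x : H) (ε δ : ℝ) (l : H) : Prop :=
  lipDual K c φ δ l ≤ 1 ∧
    ∀ l' : H, lipDual K c φ δ l' ≤ 1 → ⟪l', x⟫ - ε * ‖l'‖ ≤ ⟪l, x⟫ - ε * ‖l‖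

/-!
Weak duality: if `‖λ‖'_φ ≤ 1` and `(𝔠, f)` is feasible, testing `λ` against the point
`φ (f / 𝔠) + δ λ / ‖λ‖` of `S_δ(φ,1)` gives `⟨λ,x⟩ - ε‖λ‖ ≤ 𝔠`.

Strong duality: if `M` bounds the dual objective, positive homogeneity of `‖·‖'_φ` gives
`⟨λ,x⟩ ≤ M ‖λ‖'_φ + ε‖λ‖ = sup ⟨λ, M • S_δ(φ,1) + B(0,ε)⟩` for every `λ`, so by separation `x`
lies in the compact convex set `M • S_δ(φ,1) + B(0,ε)`, which yields a feasible pair with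
`𝔠 = M`. Hence `β^{1/p}` is the dual optimal value, and a dual optimum attains it. When
`‖x‖ > ε` this value is positive, and then an optimum has `‖λ‖'_φ = 1`: the same homogeneity
bound at `λ` itself reads `v ≤ v ‖λ‖'_φ` for its value `v > 0`.
-/

theorem exists_forall_inner_lt_inner_of_notMem [CompleteSpace H] {C : Set H} {x : H}
    (hconv : Convex ℝ C) (hC : IsClosed C) (hx : x ∉ C) :
    ∃ l : H, ∀ y ∈ C, ⟪l, y⟫ < ⟪l, x⟫ := by
  obtain ⟨g, u, hgC, hgx⟩ := geometric_hahn_banach_closed_point hconv hC hx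
  refine ⟨(InnerProductSpace.toDual ℝ H).symm g, fun y hy => ?_⟩
  simp only [InnerProductSpace.toDual_symm_apply]
  exact (hgC y hy).trans hgx

theorem exists_mem_closedBall_inner_eq (l : H) {r : ℝ} (hr : 0 ≤ r) :
    ∃ w ∈ closedBall (0 : H) r, ⟪l, w⟫ = r * ‖l‖ := by
  rcases eq_or_ne l 0 with rfl | hl
  · exact ⟨0, mem_closedBall_self hr, by simp⟩
  have hl' : ‖l‖ ≠ 0 := norm_ne_zero_iff.2 hl
  refine ⟨(r / ‖l‖) • l, ?_, ?_⟩
  · rw [mem_closedBall_zero_iff, norm_smul, Real.norm_of_nonneg (by positivity),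
      div_mul_cancel₀ r hl']
  · rw [real_inner_smul_right, real_inner_self_eq_norm_mul_norm]
    field_simp

theorem inner_sub_mul_norm_smul (l x : H) (ε : ℝ) {t : ℝ} (ht : 0 ≤ t) :
    ⟪t • l, x⟫ - ε * ‖t • l‖ = t * (⟪l, x⟫ - ε * ‖l‖) := by
  rw [real_inner_smul_left, norm_smul, Real.norm_of_nonneg ht]
  ring

structure IsHomogeneousCost (K : ℕ) (p : ℝ) (c : (Fin K → ℝ) → ℝ) : Prop where
  pos : 0 < p
  nonneg : ∀ f, 0 ≤ c f
  smul : ∀ (α : ℝ) (f : Fin K → ℝ), 0 ≤ α → c (α • f) = α ^ p * c f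
  convex : Convex ℝ {f | c f ≤ 1}
  isCompact : IsCompact {f | c f ≤ 1}

variable {K : ℕ} {p : ℝ} {c : (Fin K → ℝ) → ℝ} {φ : (Fin K → ℝ) →ₗ[ℝ] H} {x : H} {ε δ : ℝ}

namespace IsHomogeneousCost

theorem map_zero (hc : IsHomogeneousCost K p c) : c 0 = 0 := by
  simpa [Real.zero_rpow hc.pos.ne'] using hc.smul 0 0 le_rfl

theorem le_rpow_of_rpow_le (hc : IsHomogeneousCost K p c) {f : Fin K → ℝ} {t : ℝ}
    (ht : 0 ≤ t) (h : c f ^ (1 / p) ≤ t) : c f ≤ t ^ p := by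
  rwa [one_div, Real.rpow_inv_le_iff_of_pos (hc.nonneg f) ht hc.pos] at h

end IsHomogeneousCost

theorem zero_mem_lipSet (hc : IsHomogeneousCost K p c) (hδ : 0 ≤ δ) :
    (0 : H) ∈ lipSet K c φ δ :=
  ⟨0, by simp [hc.map_zero], by simpa using hδ⟩

theorem lipSet_eq_image_add :
    lipSet K c φ δ =
      (fun q : (Fin K → ℝ) × H => φ q.1 + q.2) '' ({f | c f ≤ 1} ×ˢ closedBall 0 δ) := by
  ext z
  constructor
  · rintro ⟨f, hf, hz⟩
    exact ⟨(f, z - φ f), ⟨hf, by simpa [dist_eq_norm] using hz⟩, by simp⟩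
  · rintro ⟨⟨f, w⟩, ⟨hf, hw⟩, rfl⟩
    exact ⟨f, hf, by simpa [dist_eq_norm] using hw⟩

theorem isCompact_lipSet [FiniteDimensional ℝ H] (hcpt : IsCompact {f | c f ≤ 1}) :
    IsCompact (lipSet K c φ δ) := by
  rw [lipSet_eq_image_add]
  exact (hcpt.prod (isCompact_closedBall 0 δ)).image
    ((φ.continuous_of_finiteDimensional.comp continuous_fst).add continuous_snd)

theorem convex_lipSet (hconv : Convex ℝ {f | c f ≤ 1}) : Convex ℝ (lipSet K c φ δ) := by
  rw [lipSet_eq_image_add]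
  convert (hconv.prod (convex_closedBall (0 : H) δ)).linear_image (φ.coprod LinearMap.id)
    using 2
  simp

theorem inner_le_lipDual (hS : IsCompact (lipSet K c φ δ)) (l : H) {z : H}
    (hz : z ∈ lipSet K c φ δ) : ⟪l, z⟫ ≤ lipDual K c φ δ l :=
  le_csSup (hS.image (continuous_const.inner continuous_id)).bddAbove (mem_image_of_mem _ hz)

theorem lipDual_le (h0 : (0 : H) ∈ lipSet K c φ δ) {l : H} {M : ℝ}
    (hM : ∀ z ∈ lipSet K c φ δ, ⟪l, z⟫ ≤ M) : lipDual K c φ δ l ≤ M :=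
  csSup_le (Nonempty.image _ ⟨0, h0⟩) (forall_mem_image.2 hM)

theorem lipDual_nonneg (hS : IsCompact (lipSet K c φ δ)) (h0 : (0 : H) ∈ lipSet K c φ δ)
    (l : H) : 0 ≤ lipDual K c φ δ l := by
  simpa using inner_le_lipDual hS l h0

theorem exists_mem_lipSet_inner_eq_lipDual (hS : IsCompact (lipSet K c φ δ))
    (h0 : (0 : H) ∈ lipSet K c φ δ) (l : H) :
    ∃ z ∈ lipSet K c φ δ, ⟪l, z⟫ = lipDual K c φ δ l :=
  (hS.image (continuous_const.inner continuous_id)).sSup_mem (Nonempty.image _ ⟨0, h0⟩)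

theorem lipDual_smul (hS : IsCompact (lipSet K c φ δ)) (h0 : (0 : H) ∈ lipSet K c φ δ)
    {t : ℝ} (ht : 0 ≤ t) (l : H) : lipDual K c φ δ (t • l) = t * lipDual K c φ δ l := by
  obtain ⟨z, hz, hzl⟩ := exists_mem_lipSet_inner_eq_lipDual hS h0 l
  refine le_antisymm (lipDual_le h0 fun y hy => ?_) ?_
  · rw [real_inner_smul_left]
    exact mul_le_mul_of_nonneg_left (inner_le_lipDual hS l hy) ht
  · rw [← hzl, ← real_inner_smul_left]
    exact inner_le_lipDual hS _ hz

theorem inner_sub_mul_norm_le_of_mem_lipFeas (hc : IsHomogeneousCost K p c)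
    (hS : IsCompact (lipSet K c φ δ)) (hδ : 0 ≤ δ) {l : H} (hl : lipDual K c φ δ l ≤ 1)
    {𝔠 : ℝ} {f : Fin K → ℝ} (hfeas : (𝔠, f) ∈ lipFeas K p c φ x ε δ) :
    ⟪l, x⟫ - ε * ‖l‖ ≤ 𝔠 := by
  obtain ⟨hcf, hxf⟩ := hfeas
  have h𝔠 : 0 ≤ 𝔠 := (Real.rpow_nonneg (hc.nonneg f) _).trans hcf
  -- `(t, f)` is feasible for every `t > 𝔠`; test `l` against `φ (t⁻¹ • f) + w ∈ S_δ(φ,1)`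
  -- with `‖w‖ ≤ δ` aligned with `l`.
  refine le_of_forall_gt_imp_ge_of_dense fun t ht => ?_
  have htpos : 0 < t := h𝔠.trans_lt ht
  have hft : c (t⁻¹ • f) ≤ 1 := by
    rw [hc.smul _ _ (inv_nonneg.2 htpos.le), Real.inv_rpow htpos.le,
      inv_mul_le_iff₀ (Real.rpow_pos_of_pos htpos p), mul_one]
    exact hc.le_rpow_of_rpow_le htpos.le (hcf.trans ht.le)
  obtain ⟨w, hw, hlw⟩ := exists_mem_closedBall_inner_eq l hδ
  have hmem : φ (t⁻¹ • f) + w ∈ lipSet K c φ δ :=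
    ⟨t⁻¹ • f, hft, by simpa using mem_closedBall_zero_iff.1 hw⟩
  have hdual : t⁻¹ * ⟪l, φ f⟫ + δ * ‖l‖ ≤ 1 := by
    simpa [inner_add_right, map_smul, real_inner_smul_right, hlw] using
      (inner_le_lipDual hS l hmem).trans hl
  have hres : ⟪l, x - φ f⟫ ≤ ‖l‖ * (ε + δ * t) :=
    (real_inner_le_norm l _).trans
      (mul_le_mul_of_nonneg_left (hxf.trans (by gcongr)) (norm_nonneg l))
  have hscaled := mul_le_mul_of_nonneg_left hdual htpos.le
  rw [mul_add, ← mul_assoc, mul_inv_cancel₀ htpos.ne', one_mul, mul_one] at hscaled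
  rw [inner_sub_right] at hres
  linarith

theorem ofReal_inner_sub_mul_norm_le_lipVal_rpow (hc : IsHomogeneousCost K p c)
    (hS : IsCompact (lipSet K c φ δ)) (hδ : 0 ≤ δ) {l : H} (hl : lipDual K c φ δ l ≤ 1) :
    ENNReal.ofReal (⟪l, x⟫ - ε * ‖l‖) ≤ lipVal K p c φ x ε δ ^ (1 / p) := by
  rw [one_div, ENNReal.le_rpow_inv_iff hc.pos]
  refine le_sInf (forall_mem_image.2 fun ⟨𝔠, f⟩ hfeas => ?_)
  have h𝔠 : 0 ≤ 𝔠 := (Real.rpow_nonneg (hc.nonneg f) _).trans hfeas.1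
  rw [← ENNReal.ofReal_rpow_of_nonneg h𝔠 hc.pos.le]
  exact ENNReal.rpow_le_rpow
    (ENNReal.ofReal_le_ofReal (inner_sub_mul_norm_le_of_mem_lipFeas hc hS hδ hl hfeas)) hc.pos.le

theorem inner_sub_mul_norm_le_mul_lipDual (hS : IsCompact (lipSet K c φ δ))
    (h0 : (0 : H) ∈ lipSet K c φ δ) {M : ℝ}
    (hM : ∀ l : H, lipDual K c φ δ l ≤ 1 → ⟪l, x⟫ - ε * ‖l‖ ≤ M) (l : H) :
    ⟪l, x⟫ - ε * ‖l‖ ≤ M * lipDual K c φ δ l := by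
  have hlt : ∀ s ∈ Ioi (lipDual K c φ δ l), ⟪l, x⟫ - ε * ‖l‖ ≤ M * s := by
    intro s (hs : lipDual K c φ δ l < s)
    have hspos : 0 < s := (lipDual_nonneg hS h0 l).trans_lt hs
    have h := hM (s⁻¹ • l) (by
      rw [lipDual_smul hS h0 (inv_nonneg.2 hspos.le), inv_mul_le_iff₀ hspos, mul_one]
      exact hs.le)
    rw [inner_sub_mul_norm_smul l x ε (inv_nonneg.2 hspos.le), inv_mul_le_iff₀ hspos] at h
    linarith
  exact ge_of_tendsto (((continuous_const_mul M).tendsto _).mono_left nhdsWithin_le_nhds)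
    (eventually_nhdsWithin_of_forall hlt)

theorem mem_smul_lipSet_add_closedBall [CompleteSpace H]
    (hconv : Convex ℝ (lipSet K c φ δ)) (hS : IsCompact (lipSet K c φ δ))
    (h0 : (0 : H) ∈ lipSet K c φ δ) (hε : 0 ≤ ε) {M : ℝ}
    (hM : ∀ l : H, ⟪l, x⟫ - ε * ‖l‖ ≤ M * lipDual K c φ δ l) :
    x ∈ M • lipSet K c φ δ + closedBall (0 : H) ε := by
  by_contra hx
  obtain ⟨l, hl⟩ := exists_forall_inner_lt_inner_of_notMem
    ((hconv.smul M).add (convex_closedBall 0 ε))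
    (isClosed_closedBall.add_left_of_isCompact (hS.smul M)) hx
  obtain ⟨z, hz, hzl⟩ := exists_mem_lipSet_inner_eq_lipDual hS h0 l
  obtain ⟨w, hw, hlw⟩ := exists_mem_closedBall_inner_eq l hε
  have h := hl (M • z + w) (add_mem_add (smul_mem_smul_set hz) hw)
  rw [inner_add_right, real_inner_smul_right, hzl, hlw] at h
  linarith [hM l]

theorem lipVal_le_of_mem_smul_lipSet_add_closedBall (hc : IsHomogeneousCost K p c) {M : ℝ}
    (hM : 0 ≤ M) (hx : x ∈ M • lipSet K c φ δ + closedBall (0 : H) ε) :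
    lipVal K p c φ x ε δ ≤ ENNReal.ofReal (M ^ p) := by
  obtain ⟨_, ⟨z, ⟨f, hf, hzf⟩, rfl⟩, w, hw, rfl⟩ := hx
  refine sInf_le ⟨(M, M • f), ⟨?_, ?_⟩, rfl⟩
  · change c (M • f) ^ (1 / p) ≤ M
    rw [hc.smul M f hM, one_div, Real.rpow_inv_le_iff_of_pos (by positivity [hc.nonneg f]) hM
      hc.pos]
    exact mul_le_of_le_one_right (Real.rpow_nonneg hM p) hf
  · change ‖M • z + w - φ (M • f)‖ ≤ ε + δ * M
    calc ‖M • z + w - φ (M • f)‖ = ‖M • (z - φ f) + w‖ := by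
          rw [map_smul, smul_sub, add_sub_right_comm]
      _ ≤ M * δ + ε := by
          refine (norm_add_le _ _).trans (add_le_add ?_ (mem_closedBall_zero_iff.1 hw))
          rw [norm_smul, Real.norm_of_nonneg hM]
          exact mul_le_mul_of_nonneg_left hzf hM
      _ = ε + δ * M := by ring

theorem lipVal_rpow_le [FiniteDimensional ℝ H] (hc : IsHomogeneousCost K p c) (hε : 0 ≤ ε)
    (hδ : 0 ≤ δ) {M : ℝ} (hM0 : 0 ≤ M)
    (hM : ∀ l : H, lipDual K c φ δ l ≤ 1 → ⟪l, x⟫ - ε * ‖l‖ ≤ M) :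
    lipVal K p c φ x ε δ ^ (1 / p) ≤ ENNReal.ofReal M := by
  have hS : IsCompact (lipSet K c φ δ) := isCompact_lipSet hc.isCompact
  have h0 : (0 : H) ∈ lipSet K c φ δ := zero_mem_lipSet hc hδ
  have hx := mem_smul_lipSet_add_closedBall (convex_lipSet hc.convex) hS h0 hε
    (inner_sub_mul_norm_le_mul_lipDual hS h0 hM)
  rw [one_div, ENNReal.rpow_inv_le_iff hc.pos, ENNReal.ofReal_rpow_of_nonneg hM0 hc.pos.le]
  exact lipVal_le_of_mem_smul_lipSet_add_closedBall hc hM0 hx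

theorem exists_lipDual_le_one_inner_sub_mul_norm_pos (hS : IsCompact (lipSet K c φ δ))
    (h0 : (0 : H) ∈ lipSet K c φ δ) (hε : 0 ≤ ε) (hx : ε < ‖x‖) :
    ∃ l : H, lipDual K c φ δ l ≤ 1 ∧ 0 < ⟪l, x⟫ - ε * ‖l‖ := by
  have hD := lipDual_nonneg hS h0 x
  have ht : 0 < (lipDual K c φ δ x + 1)⁻¹ := by positivity
  refine ⟨(lipDual K c φ δ x + 1)⁻¹ • x, ?_, ?_⟩
  · rw [lipDual_smul hS h0 ht.le, inv_mul_le_iff₀ (by positivity), mul_one]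
    linarith
  · rw [inner_sub_mul_norm_smul x x ε ht.le, real_inner_self_eq_norm_mul_norm]
    exact mul_pos ht (by nlinarith)

theorem lipDualOpt_zero (h0 : (0 : H) ∈ lipSet K c φ δ) (hx : ‖x‖ ≤ ε) :
    lipDualOpt K c φ x ε δ 0 := by
  refine ⟨(lipDual_le h0 fun z _ => (inner_zero_left z).le).trans zero_le_one, fun l _ => ?_⟩
  simp only [inner_zero_left, norm_zero, mul_zero, sub_zero]
  linarith [real_inner_le_norm l x, mul_le_mul_of_nonneg_left hx (norm_nonneg l)]

theorem lipDualOpt_iff_mem_lipLambda [FiniteDimensional ℝ H] (hc : IsHomogeneousCost K p c)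
    (hε : 0 ≤ ε) (hδ : 0 ≤ δ) (hx : ε < ‖x‖) (l : H) :
    lipDualOpt K c φ x ε δ l ↔ l ∈ lipLambda K p c φ x ε δ := by
  have hS : IsCompact (lipSet K c φ δ) := isCompact_lipSet hc.isCompact
  have h0 : (0 : H) ∈ lipSet K c φ δ := zero_mem_lipSet hc hδ
  obtain ⟨l₀, hl₀, hpos₀⟩ := exists_lipDual_le_one_inner_sub_mul_norm_pos hS h0 hε hx
  constructor
  · rintro ⟨hl, hopt⟩
    have hpos : 0 < ⟪l, x⟫ - ε * ‖l‖ := hpos₀.trans_le (hopt l₀ hl₀)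
    refine ⟨hl.antisymm ?_, (ofReal_inner_sub_mul_norm_le_lipVal_rpow hc hS hδ hl).antisymm
      (lipVal_rpow_le hc hε hδ hpos.le hopt)⟩
    exact (le_mul_iff_one_le_right hpos).1 (inner_sub_mul_norm_le_mul_lipDual hS h0 hopt l)
  · rintro ⟨hl, hval⟩
    have hweak : ∀ l' : H, lipDual K c φ δ l' ≤ 1 →
        ENNReal.ofReal (⟪l', x⟫ - ε * ‖l'‖) ≤ ENNReal.ofReal (⟪l, x⟫ - ε * ‖l‖) :=
      fun l' hl' => (ofReal_inner_sub_mul_norm_le_lipVal_rpow hc hS hδ hl').trans_eq hval.symm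
    have hpos : 0 < ⟪l, x⟫ - ε * ‖l‖ :=
      ENNReal.ofReal_pos.1 ((ENNReal.ofReal_pos.2 hpos₀).trans_le (hweak l₀ hl₀))
    exact ⟨hl.le, fun l' hl' => (ENNReal.ofReal_le_ofReal_iff hpos.le).1 (hweak l' hl')⟩

/-- (a) If `‖x‖ ≤ ε`, then `λ* = 0` is optimal for the dual problem.
(b) If `‖x‖ > ε`, the dual problem admits an optimal solution iff `Λ_δ(φ,x,ε) ≠ ∅`, and
`λ*` is optimal iff `λ* ∈ Λ_δ(φ,x,ε)`.  (c) If `‖x‖ > ε`, `x` is `(φ,ε,δ)`-feasible and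
`Λ_δ(φ,x,ε) = ∅`, then no optimal solution exists although the supremum is finite. -/
theorem dual_problem_solutions
    [FiniteDimensional ℝ H]
    (K : ℕ) (p : ℝ) (c : (Fin K → ℝ) → ℝ)
    (φ : (Fin K → ℝ) →ₗ[ℝ] H) (x : H) (ε δ : ℝ)
    (hp : 0 < p) (hc0 : ∀ f, 0 ≤ c f)
    (hhom : ∀ (α : ℝ) (f : Fin K → ℝ), 0 ≤ α → c (α • f) = α ^ p * c f)
    (hconv : Convex ℝ {f | c f ≤ 1}) (hcpt : IsCompact {f | c f ≤ 1})
    (hε : 0 ≤ ε) (hδ : 0 ≤ δ) :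
    (‖x‖ ≤ ε → lipDualOpt K c φ x ε δ (0 : H)) ∧
    (ε < ‖x‖ →
      ((∃ l : H, lipDualOpt K c φ x ε δ l) ↔ (lipLambda K p c φ x ε δ).Nonempty) ∧
      (∀ l : H, lipDualOpt K c φ x ε δ l ↔ l ∈ lipLambda K p c φ x ε δ)) ∧
    (ε < ‖x‖ → lipVal K p c φ x ε δ ≠ ⊤ → lipLambda K p c φ x ε δ = ∅ →
      (¬ ∃ l : H, lipDualOpt K c φ x ε δ l) ∧
      sSup ((fun l : H => ENNReal.ofReal (⟪l, x⟫ - ε * ‖l‖)) ''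
          {l : H | lipDual K c φ δ l ≤ 1}) ≠ ⊤) := by
  have hc : IsHomogeneousCost K p c := ⟨hp, hc0, hhom, hconv, hcpt⟩
  have hS : IsCompact (lipSet K c φ δ) := isCompact_lipSet hcpt
  have hopt := fun hx : ε < ‖x‖ => lipDualOpt_iff_mem_lipLambda (φ := φ) hc hε hδ hx
  refine ⟨lipDualOpt_zero (zero_mem_lipSet hc hδ), fun hx => ⟨exists_congr (hopt hx), hopt hx⟩,
    fun hx hfin hempty => ⟨?_, ?_⟩⟩
  · rintro ⟨l, hl⟩
    simpa [hempty] using (hopt hx l).1 hl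
  · have hV : lipVal K p c φ x ε δ ^ (1 / p) < ⊤ :=
      ENNReal.rpow_lt_top_of_nonneg (by positivity) hfin
    refine ((sSup_le (forall_mem_image.2 fun l hl => ?_)).trans_lt hV).ne
    exact ofReal_inner_sub_mul_norm_le_lipVal_rpow hc hS hδ hl
end
end
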